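/- arXiv:math/0207164 — 4 statements merged into one kernel-verified Lean document; each statement's English description precedes it below -/
import Mathlib

section
/- A normal topological space X has covering dimension at most n if and only if every finite open covering of X has a finite open refinement that is n-decomposable. -/
open Set

/-- A family of sets indexed by `Fin m` has order at most `n` if any `n + 2`
distinct members have empty intersection. -/
def FamOrderLE {X : Type*} {m : ℕ} (n : ℕ) (V : Fin m → Set X) : Prop :=
  ∀ g : Fin (n + 2) → Fin m, Function.Injective g → ⋂ i, V (g i) = ∅

/-- A family of sets is `n`-decomposable if its index set can be partitioned into
`n + 1` classes such that distinct indices in the same class index disjoint sets. -/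
def FamNDecomposable {X : Type*} {m : ℕ} (n : ℕ) (V : Fin m → Set X) : Prop :=
  ∃ c : Fin m → Fin (n + 1), ∀ i j, i ≠ j → c i = c j → V i ∩ V j = ∅

/-- `V` is a finite open refinement of the finite open cover `U`. -/
def IsOpenRefinement {X : Type*} [TopologicalSpace X] {k m : ℕ}
    (U : Fin k → Set X) (V : Fin m → Set X) : Prop :=
  (∀ i, IsOpen (V i)) ∧ (⋃ i, V i) = univ ∧ ∀ i, ∃ j, V i ⊆ U j

/-- A normal space `X` has covering dimension at most `n` (every finite
open cover has a finite open refinement of order at most `n`) if and only if every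
finite open cover of `X` has an `n`-decomposable finite open refinement. -/
theorem covdim_le_iff_ndecomposable_refinements {X : Type*} [TopologicalSpace X]
    [NormalSpace X] (n : ℕ) :
    (∀ (k : ℕ) (U : Fin k → Set X), (∀ i, IsOpen (U i)) → (⋃ i, U i) = univ →
        ∃ (m : ℕ) (V : Fin m → Set X), IsOpenRefinement U V ∧ FamOrderLE n V) ↔
      (∀ (k : ℕ) (U : Fin k → Set X), (∀ i, IsOpen (U i)) → (⋃ i, U i) = univ →
        ∃ (m : ℕ) (V : Fin m → Set X), IsOpenRefinement U V ∧ FamNDecomposable n V) := by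
  constructor
  · -- hard direction
    intro H k U hUo hUc
    rcases isEmpty_or_nonempty X with hX | hX
    · refine ⟨0, Fin.elim0, ⟨fun i => i.elim0, ?_, fun i => i.elim0⟩, Fin.elim0, fun i => i.elim0⟩
      simp [Set.univ_eq_empty_iff.2 hX]
    obtain ⟨m₀, V, ⟨hVo, hVc, hVref⟩, hVord⟩ := H k U hUo hUc
    -- nonempty index types
    obtain ⟨x₀⟩ := hX
    have hx₀ : x₀ ∈ ⋃ i, V i := hVc ▸ mem_univ x₀
    obtain ⟨i₀', hi₀'⟩ := mem_iUnion.1 hx₀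
    haveI : Nonempty (Fin m₀) := ⟨i₀'⟩
    have hxU : x₀ ∈ ⋃ i, U i := hUc ▸ mem_univ x₀
    obtain ⟨j₀', _⟩ := mem_iUnion.1 hxU
    haveI : Nonempty (Fin k) := ⟨j₀'⟩
    -- shrinking
    obtain ⟨v, hvc, hvo, hvcl⟩ := exists_subset_iUnion_closure_subset (u := V)
      isClosed_univ hVo (fun x _ => Set.toFinite _) (hVc ▸ subset_rfl)
    -- Urysohn functions
    have hf : ∀ i : Fin m₀, ∃ f : C(X, ℝ), EqOn f 0 (V i)ᶜ ∧ EqOn f 1 (closure (v i)) ∧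
        ∀ x, f x ∈ Icc (0:ℝ) 1 := by
      intro i
      exact exists_continuous_zero_one_of_isClosed (hVo i).isClosed_compl isClosed_closure
        (disjoint_compl_left_iff.2 (hvcl i))
    choose f hf0 hf1 hf01 using hf
    have hfV : ∀ (i : Fin m₀) (x : X), 0 < f i x → x ∈ V i := by
      intro i x hx
      by_contra hxV
      have := hf0 i hxV
      simp only [Pi.zero_apply] at this
      linarith
    -- the sets
    set A : Finset (Fin m₀) → Set X := fun S =>
      {x | ∀ i ∈ S, 0 < f i x ∧ ∀ j ∉ S, f j x < f i x} with hA
    set W : Finset (Fin m₀) → Set X := fun S => if S.Nonempty then A S else ∅ with hW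
    have hAopen : ∀ S, IsOpen (A S) := by
      intro S
      have : A S = ⋂ i ∈ S, ({x | 0 < f i x} ∩ ⋂ j ∈ (Sᶜ : Finset (Fin m₀)), {x | f j x < f i x}) := by
        ext x
        simp only [hA, mem_setOf_eq, mem_iInter, mem_inter_iff, Finset.mem_compl]
      rw [this]
      refine isOpen_biInter_finset (fun i _ => ?_)
      exact (isOpen_lt continuous_const (f i).continuous).inter
        (isOpen_biInter_finset (fun j _ => isOpen_lt (f j).continuous (f i).continuous))
    have hWopen : ∀ S, IsOpen (W S) := by
      intro S
      by_cases hS : S.Nonempty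
      · simpa [hW, hS] using hAopen S
      · simp [hW, hS]
    -- big sets are empty
    have hAbig : ∀ S : Finset (Fin m₀), n + 2 ≤ S.card → A S = ∅ := by
      intro S hS
      obtain ⟨T, hTS, hT⟩ := Finset.exists_subset_card_eq hS
      set g : Fin (n + 2) → Fin m₀ := fun a => (T.equivFin.symm (finCongr hT.symm a) : Fin m₀)
        with hg
      have hginj : Function.Injective g :=
        Subtype.val_injective.comp (T.equivFin.symm.injective.comp (finCongr hT.symm).injective)
      have hsub : A S ⊆ ⋂ a, V (g a) := by
        intro x hx
        rw [mem_iInter]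
        intro a
        have hgaT : (g a) ∈ T := (T.equivFin.symm (finCongr hT.symm a)).2
        exact hfV (g a) x (hx (g a) (hTS hgaT)).1
      have := hVord g hginj
      exact eq_empty_of_subset_empty (this ▸ hsub)
    -- covering
    have hAcov : ∀ x : X, ∃ S : Finset (Fin m₀), S.Nonempty ∧ S.card ≤ n + 1 ∧ x ∈ A S := by
      intro x
      obtain ⟨imax, himax⟩ := Finite.exists_max (fun i => f i x)
      have hxv : x ∈ ⋃ i, v i := hvc (mem_univ x)
      obtain ⟨istar, histar⟩ := mem_iUnion.1 hxv
      have h1 : f istar x = 1 := by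
        have := hf1 istar (subset_closure histar)
        simpa using this
      set S := Finset.univ.filter (fun i => ∀ j, f j x ≤ f i x) with hS
      have hmemS : imax ∈ S := by simp [hS, himax]
      have hpos : ∀ i ∈ S, 0 < f i x := by
        intro i hi
        simp only [hS, Finset.mem_filter] at hi
        have := hi.2 istar
        rw [h1] at this
        linarith
      have hxA : x ∈ A S := by
        intro i hi
        refine ⟨hpos i hi, fun j hj => ?_⟩
        simp only [hS, Finset.mem_filter, Finset.mem_univ, true_and, not_forall, not_le] at hj
        obtain ⟨j', hj'⟩ := hj
        simp only [hS, Finset.mem_filter] at hi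
        exact lt_of_lt_of_le hj' (hi.2 j')
      refine ⟨S, ⟨imax, hmemS⟩, ?_, hxA⟩
      by_contra hcard
      push_neg at hcard
      have : A S = ∅ := hAbig S hcard
      rw [this] at hxA
      exact hxA
    -- now build the family
    set m := Fintype.card (Finset (Fin m₀)) with hm
    set e := Fintype.equivFin (Finset (Fin m₀)) with he
    refine ⟨m, fun i => W (e.symm i), ⟨fun i => hWopen _, ?_, ?_⟩, ?_⟩
    · -- cover
      rw [eq_univ_iff_forall]
      intro x
      obtain ⟨S, hSne, _, hxA⟩ := hAcov x
      refine mem_iUnion.2 ⟨e S, ?_⟩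
      simp only [Equiv.symm_apply_apply, hW]
      rw [if_pos hSne]
      exact hxA
    · -- refinement
      intro i
      rcases (e.symm i).eq_empty_or_nonempty with hSe | hSne
      · exact ⟨Classical.arbitrary _, by simp [hW, hSe]⟩
      · obtain ⟨i₁, hi₁⟩ := id hSne
        obtain ⟨j, hj⟩ := hVref i₁
        refine ⟨j, ?_⟩
        intro x hx
        simp only [hW, if_pos hSne] at hx
        exact hj (hfV i₁ x (hx i₁ hi₁).1)
    · -- decomposable
      have key : ∀ S T : Finset (Fin m₀), S ≠ T →
          min (S.card - 1) n = min (T.card - 1) n → W S ∩ W T = ∅ := by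
        intro S T hST hcv
        rcases S.eq_empty_or_nonempty with hSe | hSne
        · simp [hW, hSe]
        rcases T.eq_empty_or_nonempty with hTe | hTne
        · simp [hW, hTe]
        by_cases hScard : n + 2 ≤ S.card
        · simp [hW, if_pos hSne, hAbig S hScard]
        by_cases hTcard : n + 2 ≤ T.card
        · simp [hW, if_pos hTne, hAbig T hTcard]
        push_neg at hScard hTcard
        have hS1 : 1 ≤ S.card := Finset.card_pos.2 hSne
        have hT1 : 1 ≤ T.card := Finset.card_pos.2 hTne
        have hcard : S.card = T.card := by omega
        have hSTne : (S \ T).Nonempty := by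
          rw [Finset.sdiff_nonempty]
          intro hsub
          exact hST (Finset.eq_of_subset_of_card_le hsub (le_of_eq hcard.symm))
        have hTSne : (T \ S).Nonempty := by
          rw [Finset.sdiff_nonempty]
          intro hsub
          exact hST (Finset.eq_of_subset_of_card_le hsub (le_of_eq hcard)).symm
        obtain ⟨a, ha⟩ := hSTne
        obtain ⟨b, hb⟩ := hTSne
        rw [Finset.mem_sdiff] at ha hb
        rw [eq_empty_iff_forall_notMem]
        rintro x ⟨hxS, hxT⟩
        simp only [hW, if_pos hSne] at hxS
        simp only [hW, if_pos hTne] at hxT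
        have h1 : f b x < f a x := (hxS a ha.1).2 b hb.2
        have h2 : f a x < f b x := (hxT b hb.1).2 a ha.2
        linarith
      refine ⟨fun i => ⟨min ((e.symm i).card - 1) n, by omega⟩, ?_⟩
      intro i j hij hc
      refine key _ _ (fun h => hij ?_) ?_
      · rw [← Equiv.apply_symm_apply e i, ← Equiv.apply_symm_apply e j, h]
      · exact congrArg Fin.val hc
  · -- easy direction
    intro H k U hUo hUc
    obtain ⟨m, V, href, c, hc⟩ := H k U hUo hUc
    refine ⟨m, V, href, ?_⟩
    intro g hg
    have : Fintype.card (Fin (n + 1)) < Fintype.card (Fin (n + 2)) := by simp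
    obtain ⟨a, b, hab, hcab⟩ := Fintype.exists_ne_map_eq_of_card_lt (fun i => c (g i)) this
    have hgab : g a ≠ g b := fun h => hab (hg h)
    have hdisj := hc (g a) (g b) hgab hcab
    rw [eq_empty_iff_forall_notMem]
    intro x hx
    rw [mem_iInter] at hx
    rw [eq_empty_iff_forall_notMem] at hdisj
    exact hdisj x ⟨hx a, hx b⟩
end

section
/- Let A and B be C*-algebras and φ : B → A a completely positive contractive map. Then for all x, y ∈ B, ‖φ(xy) − φ(x)φ(y)‖ ≤ ‖φ(xx*) − φ(x)φ(x*)‖^{1/2} · ‖y‖. -/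
open scoped BigOperators

/-- A (linear) map between `ℂ`-star-algebras is completely positive if it is
linear and for all `k`, all `b : Fin k → B` and `v : Fin k → A`, the element
`∑ i j, v i * φ (b i * b j) * v j` is positive. -/
def IsCompletelyPositive {B A : Type*}
    [NonUnitalRing B] [StarRing B] [Module ℂ B]
    [NonUnitalRing A] [StarRing A] [PartialOrder A] [Module ℂ A] (φ : B → A) : Prop :=
  (∀ x y, φ (x + y) = φ x + φ y) ∧ (∀ (c : ℂ) (x : B), φ (c • x) = c • φ x) ∧
    ∀ (k : ℕ) (b : Fin k → B) (v : Fin k → A),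
      0 ≤ ∑ i, ∑ j, star (v i) * φ (star (b i) * b j) * v j

/-!
Write `D(p, q) = φ(p* q) - φ(p)* φ(q)`. The Kadison–Schwarz inequality for completely positive
contractions, applied to two vectors, says that the `A`-valued form `D` is positive semidefinite:
the block matrix `[[D(p,p), D(p,q)], [D(q,p), D(q,q)]]` is positive. In a C*-algebra this gives
the Cauchy–Schwarz bound `‖D(p,q)‖² ≤ ‖D(p,p)‖ ‖D(q,q)‖`. With `p = x*`, `q = y` the left side is
`‖φ(xy) - φ(x)φ(y)‖²`, `D(x*, x*) = φ(xx*) - φ(x)φ(x*)`, and `0 ≤ D(y, y) ≤ φ(y*y)` has norm at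
most `‖y‖²`. Since neither algebra need be unital, units are replaced throughout by increasing
approximate units.
-/

open Filter Topology

section ApproximateUnit

variable {A : Type*} [NonUnitalCStarAlgebra A] [PartialOrder A]

lemma Filter.IsIncreasingApproximateUnit.tendsto_mul_mul {l : Filter A}
    (hl : l.IsIncreasingApproximateUnit) (m : A) :
    Tendsto (fun e ↦ e * m * e) l (𝓝 m) := by
  have hright : Tendsto (fun e ↦ m * e - m) l (𝓝 0) := by
    simpa using (hl.tendsto_mul_left m).sub_const m
  have hleft : Tendsto (fun e ↦ e * (m * e - m)) l (𝓝 0) := by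
    refine squeeze_zero_norm' ?_ (tendsto_zero_iff_norm_tendsto_zero.mp hright)
    filter_upwards [hl.eventually_norm] with e he
    calc ‖e * (m * e - m)‖ ≤ ‖e‖ * ‖m * e - m‖ := norm_mul_le _ _
      _ ≤ ‖m * e - m‖ := mul_le_of_le_one_left (norm_nonneg _) he
  have hsum := (hleft.add_const m).congr' (f₂ := fun e ↦ e * m * e - e * m + m) <|
    .of_forall fun e ↦ by simp only [mul_sub, mul_assoc]
  simpa using hsum.add ((hl.tendsto_mul_right m).sub_const m)

namespace CStarAlgebra

variable [StarOrderedRing A]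

lemma nonneg_of_forall_star_conjugate_nonneg {x : A} (h : ∀ a, 0 ≤ star a * x * a) : 0 ≤ x := by
  have hl := increasingApproximateUnit A
  refine isClosed_nonneg.mem_of_tendsto (hl.tendsto_mul_mul x) ?_
  filter_upwards [hl.eventually_star_eq] with e he
  simpa [he] using h e

lemma norm_sq_le_norm_mul_norm_of_block_nonneg {P Q U : A}
    (h : ∀ a e : A, 0 ≤ star a * P * a + star a * U * e + star e * star U * a + star e * Q * e) :
    ‖U‖ ^ 2 ≤ ‖P‖ * ‖Q‖ := by
  have hP : 0 ≤ P := nonneg_of_forall_star_conjugate_nonneg fun a ↦ by simpa using h a 0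
  have key : ∀ r : ℝ, ‖P‖ < r → ‖U‖ ^ 2 ≤ r * ‖Q‖ := by
    intro r hr
    have hr0 : 0 < r := (norm_nonneg P).trans_lt hr
    have hX : 0 ≤ star U * P * U - (2 * r) • (star U * U) + (r * r) • Q := by
      refine nonneg_of_forall_star_conjugate_nonneg fun a ↦ ?_
      -- the quadratic form evaluated at `(U a, -r a)`
      convert h (U * a) (-(r • a)) using 1
      simp only [star_mul, star_neg, star_smul, star_trivial, mul_neg, neg_mul, smul_mul_assoc,
        mul_smul_comm, mul_sub, sub_mul, mul_add, add_mul, mul_assoc]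
      module
    have hUPU : star U * P * U ≤ r • (star U * U) :=
      (star_left_conjugate_le_norm_smul hP.isSelfAdjoint).trans
        (smul_le_smul_of_nonneg_right hr.le (star_mul_self_nonneg U))
    have hUU : star U * U ≤ r • Q := by
      have : r • (star U * U) ≤ r • r • Q := by
        rw [← sub_nonneg]
        convert add_nonneg hX (sub_nonneg.mpr hUPU) using 1
        module
      exact (smul_le_smul_iff_of_pos_left hr0).mp this
    calc ‖U‖ ^ 2 = ‖star U * U‖ := by rw [CStarRing.norm_star_mul_self, sq]
      _ ≤ ‖r • Q‖ := norm_le_norm_of_nonneg_of_le (star_mul_self_nonneg U) hUU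
      _ = r * ‖Q‖ := by rw [norm_smul, Real.norm_of_nonneg hr0.le]
  have hlim : Tendsto (· * ‖Q‖) (𝓝[>] ‖P‖) (𝓝 (‖P‖ * ‖Q‖)) :=
    tendsto_nhdsWithin_of_tendsto_nhds ((continuous_mul_const _).tendsto _)
  exact ge_of_tendsto hlim (eventually_nhdsWithin_of_forall key)

end CStarAlgebra

end ApproximateUnit

def multiplicativityDefect {B A : Type*} [Mul B] [Star B] [NonUnitalRing A] [Star A]
    (φ : B → A) (p q : B) : A :=
  φ (star p * q) - star (φ p) * φ q

namespace IsCompletelyPositive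

variable {B A : Type*} [NonUnitalCStarAlgebra B] [NonUnitalCStarAlgebra A] [PartialOrder A]
  {φ : B → A}

lemma continuous (hφ : IsCompletelyPositive φ) (hcontr : ∀ x, ‖φ x‖ ≤ ‖x‖) : Continuous φ :=
  AddMonoidHomClass.continuous_of_bound (AddMonoidHom.mk' φ hφ.1) 1 (by simpa using hcontr)

variable [StarOrderedRing A]

lemma map_star_mul_self_nonneg (hφ : IsCompletelyPositive φ) (c : B) : 0 ≤ φ (star c * c) :=
  CStarAlgebra.nonneg_of_forall_star_conjugate_nonneg fun a ↦ by simpa using hφ.2.2 1 ![c] ![a]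

lemma star_map_star_mul (hφ : IsCompletelyPositive φ) (p q : B) :
    star (φ (star p * q)) = φ (star q * p) := by
  have hsa c : star (φ (star c * c)) = φ (star c * c) :=
    (hφ.map_star_mul_self_nonneg c).isSelfAdjoint.star_eq
  have hsum := hsa (p + q)
  have hrot := hsa (p + Complex.I • q)
  simp only [star_add, star_smul, add_mul, mul_add, smul_mul_assoc, mul_smul_comm, hφ.1, hφ.2.1,
    hsa p, hsa q, Complex.star_def, Complex.conj_I, map_neg, neg_neg] at hsum hrot
  linear_combination (norm := skip) (2⁻¹ : ℂ) • hsum + (Complex.I / 2) • hrot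
  match_scalars <;> ring_nf <;> simp [Complex.I_sq]

section

variable [PartialOrder B] [StarOrderedRing B]

lemma map_star (hφ : IsCompletelyPositive φ) (hcontr : ∀ x, ‖φ x‖ ≤ ‖x‖) (b : B) :
    φ (star b) = star (φ b) := by
  have hl := CStarAlgebra.increasingApproximateUnit B
  have hcont := hφ.continuous hcontr
  have hleft : Tendsto (fun e ↦ φ (star b * e)) (CStarAlgebra.approximateUnit B)
      (𝓝 (φ (star b))) :=
    (hcont.tendsto _).comp (hl.tendsto_mul_left _)
  have hright : Tendsto (fun e ↦ star (φ (e * b))) (CStarAlgebra.approximateUnit B)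
      (𝓝 (star (φ b))) :=
    (continuous_star.tendsto _).comp ((hcont.tendsto _).comp (hl.tendsto_mul_right _))
  refine tendsto_nhds_unique hleft (hright.congr' ?_)
  filter_upwards [hl.eventually_star_eq] with e he
  simpa [he] using hφ.star_map_star_mul e b

lemma star_sum_mul_sum_le (hφ : IsCompletelyPositive φ) (hcontr : ∀ x, ‖φ x‖ ≤ ‖x‖) {k : ℕ}
    (b : Fin k → B) (v : Fin k → A) :
    star (∑ i, φ (b i) * v i) * ∑ i, φ (b i) * v i ≤
      ∑ i, ∑ j, star (v i) * φ (star (b i) * b j) * v j := by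
  set c := ∑ i, φ (b i) * v i
  set S := ∑ i, ∑ j, star (v i) * φ (star (b i) * b j) * v j
  set w : B → A := fun e ↦ ∑ i, φ (star e * b i) * v i
  have hl := CStarAlgebra.increasingApproximateUnit B
  have hcont := hφ.continuous hcontr
  have hw : Tendsto w (CStarAlgebra.approximateUnit B) (𝓝 c) := by
    refine tendsto_finsetSum _ fun i _ ↦ ((hcont.tendsto _).comp ?_).mul_const (v i)
    refine (hl.tendsto_mul_right (b i)).congr' ?_
    filter_upwards [hl.eventually_star_eq] with e he
    rw [he]
  have hbound : ∀ᶠ e in CStarAlgebra.approximateUnit B,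
      0 ≤ S - star (w e) * c - star c * w e + star c * c := by
    filter_upwards [hl.eventually_norm] with e he
    -- complete positivity for the family `b` extended by `e`, tested against `v` extended by `-c`
    have hpos := hφ.2.2 (k + 1) (Fin.snoc b e) (Fin.snoc v (-c))
    simp only [Fin.sum_univ_castSucc, Fin.snoc_castSucc, Fin.snoc_last] at hpos
    have hconj : star c * φ (star e * e) * c ≤ star c * c := by
      have hnorm : ‖φ (star e * e)‖ ≤ 1 := (hcontr _).trans <| by
        rw [CStarRing.norm_star_mul_self]; exact mul_le_one₀ he (norm_nonneg e) he
      refine (CStarAlgebra.star_left_conjugate_le_norm_smul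
        (hφ.map_star_mul_self_nonneg e).isSelfAdjoint).trans ?_
      simpa using smul_le_smul_of_nonneg_right hnorm (star_mul_self_nonneg c)
    calc 0 ≤ _ := hpos
      _ = S - star (w e) * c - star c * w e + star c * φ (star e * e) * c := by
        simp only [w, S, star_sum, star_mul, hφ.star_map_star_mul, Finset.sum_add_distrib,
          Finset.sum_mul, Finset.mul_sum, star_neg, mul_neg, neg_mul, neg_neg, mul_assoc,
          Finset.sum_neg_distrib]
        abel
      _ ≤ S - star (w e) * c - star c * w e + star c * c := by gcongr
  have hlim := ((tendsto_const_nhds (x := S)).sub (hw.star.mul_const c)).sub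
    (hw.const_mul (star c)) |>.add_const (star c * c)
  have hmem := CStarAlgebra.isClosed_nonneg.mem_of_tendsto hlim hbound
  rwa [Set.mem_ofPred_eq, sub_add_cancel, sub_nonneg] at hmem

/-- The right-hand side is `(a, e)* M (a, e)` for the block matrix
`M = [[D(p,p), D(p,q)], [D(q,p), D(q,q)]]`, using `D(q,p) = D(p,q)*`. -/
lemma multiplicativityDefect_block_nonneg (hφ : IsCompletelyPositive φ)
    (hcontr : ∀ x, ‖φ x‖ ≤ ‖x‖) (p q : B) (a e : A) :
    0 ≤ star a * multiplicativityDefect φ p p * a + star a * multiplicativityDefect φ p q * e +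
      star e * star (multiplicativityDefect φ p q) * a +
      star e * multiplicativityDefect φ q q * e := by
  have hks := sub_nonneg.mpr (hφ.star_sum_mul_sum_le hcontr ![p, q] ![a, e])
  convert hks using 1
  simp only [multiplicativityDefect, Fin.sum_univ_two, Matrix.cons_val_zero, Matrix.cons_val_one,
    star_add, star_sub, star_mul, star_star, hφ.star_map_star_mul]
  noncomm_ring

lemma norm_multiplicativityDefect_sq_le (hφ : IsCompletelyPositive φ)
    (hcontr : ∀ x, ‖φ x‖ ≤ ‖x‖) (p q : B) :
    ‖multiplicativityDefect φ p q‖ ^ 2 ≤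
      ‖multiplicativityDefect φ p p‖ * ‖multiplicativityDefect φ q q‖ :=
  CStarAlgebra.norm_sq_le_norm_mul_norm_of_block_nonneg
    (hφ.multiplicativityDefect_block_nonneg hcontr p q)

lemma norm_multiplicativityDefect_self_le (hφ : IsCompletelyPositive φ)
    (hcontr : ∀ x, ‖φ x‖ ≤ ‖x‖) (q : B) :
    ‖multiplicativityDefect φ q q‖ ≤ ‖q‖ ^ 2 := by
  have hnonneg : 0 ≤ multiplicativityDefect φ q q :=
    CStarAlgebra.nonneg_of_forall_star_conjugate_nonneg fun e ↦ by
      simpa using hφ.multiplicativityDefect_block_nonneg hcontr q q 0 e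
  have hle : multiplicativityDefect φ q q ≤ φ (star q * q) :=
    sub_le_self _ (star_mul_self_nonneg _)
  calc ‖multiplicativityDefect φ q q‖ ≤ ‖φ (star q * q)‖ :=
        CStarAlgebra.norm_le_norm_of_nonneg_of_le hnonneg hle
    _ ≤ ‖star q * q‖ := hcontr _
    _ = ‖q‖ ^ 2 := by rw [CStarRing.norm_star_mul_self, sq]

end

end IsCompletelyPositive

/-- For a completely positive contractive map `φ : B → A` between
C*-algebras, `‖φ(xy) - φ(x)φ(y)‖ ≤ ‖φ(xx*) - φ(x)φ(x*)‖^{1/2} ⬝ ‖y‖`. -/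
theorem cpc_multiplicative_domain_estimate {B A : Type*}
    [NonUnitalCStarAlgebra B] [NonUnitalCStarAlgebra A]
    [PartialOrder A] [StarOrderedRing A]
    (φ : B → A) (hcp : IsCompletelyPositive φ) (hcontr : ∀ x, ‖φ x‖ ≤ ‖x‖) :
    ∀ x y : B, ‖φ (x * y) - φ x * φ y‖ ≤
      Real.sqrt ‖φ (x * star x) - φ x * φ (star x)‖ * ‖y‖ := by
  intro x y
  -- `B` is given no order; its spectral order provides the approximate unit used above
  let := CStarAlgebra.spectralOrder B
  have := CStarAlgebra.spectralOrderedRing B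
  have hxy : multiplicativityDefect φ (star x) y = φ (x * y) - φ x * φ y := by
    simp [multiplicativityDefect, ← hcp.map_star hcontr]
  have hxx : multiplicativityDefect φ (star x) (star x) =
      φ (x * star x) - φ x * φ (star x) := by
    simp [multiplicativityDefect, ← hcp.map_star hcontr]
  rw [← hxy, ← hxx, ← Real.sqrt_sq (norm_nonneg y), ← Real.sqrt_mul (norm_nonneg _)]
  refine Real.le_sqrt_of_sq_le ((hcp.norm_multiplicativityDefect_sq_le hcontr _ _).trans ?_)
  gcongr
  exact hcp.norm_multiplicativityDefect_self_le hcontr y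
end

section
/- Let A be a C*-algebra, b ∈ A positive with ‖b‖ ≤ 1, h ∈ A positive with ‖h‖ ≤ 1, and 0 < δ < 1. Suppose ‖b − bh‖ < δ. Let d := g_{0,√δ}(b), where g_{0,√δ} is the continuous function that is 0 at 0, equal to 1 on [√δ, 1], and linear on [0, √δ]. Then ‖d(1−h)‖ ≤ √δ (where the computation takes place in the unitization of A). -/
/-- Let `b, h` be positive contractions in a C*-algebra `A` with
`‖b - b h‖ < δ` for some `0 < δ < 1`.  With `d := g_{0,√δ}(b)` (the continuous
function which is `0` at `0`, `1` on `[√δ, ∞)` and linear on `[0, √δ]`,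
applied to `b` by functional calculus), one has `‖d(1 - h)‖ ≤ √δ`, the
computation taking place in the unitization of `A`. -/
theorem norm_g_one_sub_le {A : Type*} [NonUnitalCStarAlgebra A] [StarModule ℂ A]
    [PartialOrder A] [StarOrderedRing A]
    (b h : A) (hb : 0 ≤ b) (hb1 : ‖b‖ ≤ 1) (hh : 0 ≤ h) (hh1 : ‖h‖ ≤ 1)
    (δ : ℝ) (hδ0 : 0 < δ) (hδ1 : δ < 1) (hbh : ‖b - b * h‖ < δ) :
    ‖(cfcₙ (fun t : ℝ => min 1 (max 0 (t / Real.sqrt δ))) b : Unitization ℂ A) *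
        (1 - (h : Unitization ℂ A))‖ ≤ Real.sqrt δ := by
  have hsδ : (0:ℝ) < Real.sqrt δ := Real.sqrt_pos.2 hδ0
  have hbsa : IsSelfAdjoint b := .of_nonneg hb
  have hhsa : IsSelfAdjoint h := .of_nonneg hh
  set g : ℝ → ℝ := fun t => min 1 (max 0 (t / Real.sqrt δ)) with hgdef
  have hgc : Continuous g := by fun_prop
  have hg0 : g 0 = 0 := by simp [hgdef]
  set d : A := cfcₙ g b with hd
  have hd_nonneg : 0 ≤ d := cfcₙ_nonneg fun x _ => by positivity
  have hdsa : IsSelfAdjoint d := .of_nonneg hd_nonneg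
  -- key inequality d² ≤ δ⁻¹ • b²
  have hdd : d * d ≤ δ⁻¹ • (b * b) := by
    have e1 : d * d = cfcₙ (fun t => g t * g t) b :=
      (cfcₙ_mul g g b hgc.continuousOn hg0 hgc.continuousOn hg0).symm
    have hb2 : cfcₙ (fun t : ℝ => t * t) b = b * b := by
      rw [cfcₙ_mul (fun t : ℝ => t) (fun t : ℝ => t) b (by fun_prop) rfl (by fun_prop) rfl,
        cfcₙ_id' ℝ b]
    have e2 : δ⁻¹ • (b * b) = cfcₙ (fun t : ℝ => δ⁻¹ • (t * t)) b := by
      rw [cfcₙ_smul δ⁻¹ (fun t : ℝ => t * t) b (by fun_prop) (by simp), hb2]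
    rw [e1, e2]
    refine cfcₙ_mono (fun t ht => ?_) ?_ ?_ ?_ ?_
    · have ht0 : 0 ≤ t := quasispectrum_nonneg_of_nonneg b hb t ht
      have h1 : g t ≤ t / Real.sqrt δ := by
        simp only [hgdef]
        exact min_le_of_right_le (max_le (div_nonneg ht0 hsδ.le) le_rfl)
      have h2 : 0 ≤ g t := by positivity
      calc g t * g t ≤ (t / Real.sqrt δ) * (t / Real.sqrt δ) :=
            mul_le_mul h1 h1 h2 (by positivity)
        _ = δ⁻¹ • (t * t) := by
            rw [smul_eq_mul, div_mul_div_comm, Real.mul_self_sqrt hδ0.le]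
            ring
    · fun_prop
    · fun_prop
    · simp [hgdef]
    · simp
  -- move to the unitization
  set D : Unitization ℂ A := (d : Unitization ℂ A) with hD
  set B : Unitization ℂ A := (b : Unitization ℂ A) with hB
  set X : Unitization ℂ A := 1 - (h : Unitization ℂ A) with hX
  have hDeq : cfcₙ g B = D := by
    rw [hB, cfcₙ_eq_cfc hgc.continuousOn hg0, hD, hd,
      Unitization.real_cfcₙ_eq_cfc_inr b g hg0]
  have hXsa : star X = X := by
    simp [hX, star_sub, ← Unitization.inr_star, hhsa.star_eq]
  have hDsa : star D = D := by
    simp [hD, ← Unitization.inr_star, hdsa.star_eq]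
  have hBsa : star B = B := by
    simp [hB, ← Unitization.inr_star, hbsa.star_eq]
  have hdd_sa : IsSelfAdjoint (d * d) := by
    rw [IsSelfAdjoint, star_mul, hdsa.star_eq]
  have hbb_sa : IsSelfAdjoint (δ⁻¹ • (b * b)) := by
    rw [IsSelfAdjoint, star_smul, star_mul, hbsa.star_eq, star_trivial]
  have hDD : D * D ≤ δ⁻¹ • (B * B) := by
    rw [hD, hB, ← Unitization.inr_mul, ← Unitization.inr_mul, ← Unitization.inr_smul]
    exact (Unitization.inr_le_iff _ _ hdd_sa hbb_sa).mpr hdd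
  have hconj : X * (D * D) * X ≤ X * (δ⁻¹ • (B * B)) * X := by
    have := star_left_conjugate_le_conjugate hDD X
    rwa [hXsa] at this
  have hXDX : X * (D * D) * X = star (D * X) * (D * X) := by
    rw [star_mul, hXsa, hDsa]; simp [mul_assoc]
  have hXBX : X * (B * B) * X = star (B * X) * (B * X) := by
    rw [star_mul, hXsa, hBsa]; simp [mul_assoc]
  have hnn : 0 ≤ X * (D * D) * X := hXDX ▸ star_mul_self_nonneg (D * X)
  have hnorm1 : ‖X * (D * D) * X‖ ≤ ‖X * (δ⁻¹ • (B * B)) * X‖ :=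
    CStarAlgebra.norm_le_norm_of_nonneg_of_le hnn hconj
  have hBX : B * X = ((b - b * h : A) : Unitization ℂ A) := by
    rw [hB, hX, Unitization.inr_sub, Unitization.inr_mul, mul_sub, mul_one]
  have hBXnorm : ‖B * X‖ < δ := by
    rw [hBX, Unitization.norm_inr]; exact hbh
  have hrhs : ‖X * (δ⁻¹ • (B * B)) * X‖ = δ⁻¹ * (‖B * X‖ * ‖B * X‖) := by
    have : X * (δ⁻¹ • (B * B)) * X = δ⁻¹ • (X * (B * B) * X) := by
      simp [smul_mul_assoc, mul_smul_comm]
    rw [this, norm_smul, hXBX, CStarRing.norm_star_mul_self,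
      Real.norm_eq_abs, abs_of_nonneg (by positivity)]
  have hlhs : ‖X * (D * D) * X‖ = ‖D * X‖ * ‖D * X‖ := by
    rw [hXDX, CStarRing.norm_star_mul_self]
  have hsq : ‖D * X‖ * ‖D * X‖ ≤ δ := by
    calc ‖D * X‖ * ‖D * X‖ = ‖X * (D * D) * X‖ := hlhs.symm
      _ ≤ δ⁻¹ * (‖B * X‖ * ‖B * X‖) := hrhs ▸ hnorm1
      _ ≤ δ⁻¹ * (δ * δ) := by
          have h0 : 0 ≤ ‖B * X‖ := norm_nonneg _
          have h1 : ‖B * X‖ * ‖B * X‖ ≤ δ * δ :=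
            mul_le_mul hBXnorm.le hBXnorm.le h0 hδ0.le
          exact mul_le_mul_of_nonneg_left h1 (by positivity)
      _ = δ := by field_simp
  rw [hDeq]
  calc ‖D * X‖ = Real.sqrt (‖D * X‖ * ‖D * X‖) :=
        (Real.sqrt_mul_self (norm_nonneg _)).symm
    _ ≤ Real.sqrt δ := Real.sqrt_le_sqrt hsq
end

section
/- Let A be a C*-algebra, b', h ∈ A positive contractions with db' = b' for some positive contraction d satisfying ‖d(1−h)‖ ≤ √δ (in the unitization), where 0 < δ < 1. Set b'' := (b')^{1/2} h² (b')^{1/2}. Then b'' ≤ b' and b'' ≥ (1 − 2√δ)·b'; consequently ‖b' − b''‖ ≤ 2√δ. -/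
open scoped CStarAlgebra

/-! Write `s := (b')^{1/2}`. Since `d b' = b'`, the vanishing of `(ds - s)(ds - s)^*` gives
`d s = s = s d`, hence `b' - b'' = s (d² - d h² d) s`. Conjugating by `s` bounds this by
`‖d² - d h² d‖ • b'`, and in the unitization `d² - d h² d = d(1 - h) · (1 + h)d` has norm at most
`2√δ`. Together with `b'' ≤ ‖h²‖ • b' ≤ b'` this sandwiches `b' - b''` between `0` and `2√δ • b'`,
which gives both order inequalities and the norm bound. -/

lemma IsSelfAdjoint.mul_eq_of_mul_mul_self_eq {A : Type*} [NonUnitalNormedRing A] [StarRing A]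
    [CStarRing A] {s d : A} (hs : IsSelfAdjoint s) (hd : d * (s * s) = s * s) : d * s = s := by
  have hd' : s * s * star d = s * s := by
    simpa only [star_mul, hs.star_eq] using congrArg star hd
  have hzero : (d * s - s) * star (d * s - s) = 0 := by
    have hexpand : (d * s - s) * star (d * s - s)
        = d * (s * s) * star d - d * (s * s) - s * s * star d + s * s := by
      simp only [star_sub, star_mul, hs.star_eq]
      noncomm_ring
    rw [hexpand, hd, hd']
    abel
  exact sub_eq_zero.mp <| (CStarRing.mul_star_self_eq_zero_iff _).mp hzero

section CStarAlgebra

variable {A : Type*} [NonUnitalCStarAlgebra A]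

lemma norm_mul_self_sub_mul_mul_self_mul_le {d h : A} (hd : ‖d‖ ≤ 1) (hh : ‖h‖ ≤ 1) :
    ‖d * d - d * (h * h) * d‖ ≤ 2 * ‖(d : A⁺¹) * (1 - (h : A⁺¹))‖ := by
  have hfactor : ((d * d - d * (h * h) * d : A) : A⁺¹)
      = ((d : A⁺¹) * (1 - (h : A⁺¹))) * ((1 + (h : A⁺¹)) * (d : A⁺¹)) := by
    push_cast
    noncomm_ring
  have hright : ‖(1 + (h : A⁺¹)) * (d : A⁺¹)‖ ≤ 2 :=
    calc ‖(1 + (h : A⁺¹)) * (d : A⁺¹)‖ ≤ (‖(1 : A⁺¹)‖ + ‖(h : A⁺¹)‖) * ‖(d : A⁺¹)‖ := by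
          grw [norm_mul_le, norm_add_le]
      _ ≤ 2 := by
          rw [norm_one, Unitization.norm_inr, Unitization.norm_inr]
          nlinarith [norm_nonneg h, norm_nonneg d]
  rw [← Unitization.norm_inr (𝕜 := ℂ), hfactor]
  grw [norm_mul_le, hright]
  linarith

variable [PartialOrder A] [StarOrderedRing A]

lemma conjugate_mul_self_le_mul_self {s h : A} (hs : IsSelfAdjoint s) (hh : IsSelfAdjoint h)
    (hh1 : ‖h‖ ≤ 1) : s * (h * h) * s ≤ s * s := by
  have hhh : IsSelfAdjoint (h * h) := by simpa [hh.star_eq] using IsSelfAdjoint.star_mul_self h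
  have hnorm : ‖h * h‖ ≤ 1 := (norm_mul_le h h).trans (by nlinarith [norm_nonneg h])
  calc s * (h * h) * s ≤ ‖h * h‖ • (s * s) := by
        simpa [hs.star_eq] using CStarAlgebra.star_left_conjugate_le_norm_smul hhh (a := s)
    _ ≤ s * s := by
        grw [hnorm, one_smul]
        simpa [hs.star_eq] using star_mul_self_nonneg s

lemma mul_self_sub_conjugate_le_norm_smul {s h d : A} (hs : IsSelfAdjoint s)
    (hh : IsSelfAdjoint h) (hd : IsSelfAdjoint d) (hds : d * s = s) :
    s * s - s * (h * h) * s ≤ ‖d * d - d * (h * h) * d‖ • (s * s) := by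
  have hsd : s * d = s := by simpa only [star_mul, hs.star_eq, hd.star_eq] using congrArg star hds
  have hconj : star s * (d * d - d * (h * h) * d) * s = s * s - s * (h * h) * s :=
    calc star s * (d * d - d * (h * h) * d) * s
        = (s * d) * (d * s) - (s * d) * (h * h) * (d * s) := by rw [hs.star_eq]; noncomm_ring
      _ = s * s - s * (h * h) * s := by rw [hsd, hds]
  have hsa : IsSelfAdjoint (d * d - d * (h * h) * d) := by
    refine .sub (by simpa [hd.star_eq] using IsSelfAdjoint.star_mul_self d) ?_
    simp [IsSelfAdjoint, star_mul, hd.star_eq, hh.star_eq, mul_assoc]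
  rw [← hconj]
  simpa [hs.star_eq] using CStarAlgebra.star_left_conjugate_le_norm_smul hsa (a := s)

lemma norm_le_of_nonneg_of_le_smul {x a : A} {c : ℝ} (hx : 0 ≤ x) (hxa : x ≤ c • a)
    (hc : 0 ≤ c) (ha : ‖a‖ ≤ 1) : ‖x‖ ≤ c :=
  calc ‖x‖ ≤ ‖c • a‖ := CStarAlgebra.norm_le_norm_of_nonneg_of_le hx hxa
    _ ≤ c := by rw [norm_smul, Real.norm_of_nonneg hc]; nlinarith [norm_nonneg a]

end CStarAlgebra

theorem b''_comparisons_general {A : Type*} [NonUnitalCStarAlgebra A]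
    [PartialOrder A] [StarOrderedRing A]
    (b' h d : A) (hb' : 0 ≤ b') (hb'1 : ‖b'‖ ≤ 1) (hh : 0 ≤ h) (hh1 : ‖h‖ ≤ 1)
    (hd : 0 ≤ d) (hd1 : ‖d‖ ≤ 1) (hdb' : d * b' = b')
    (δ : ℝ)
    (hdh : ‖(d : Unitization ℂ A) * (1 - (h : Unitization ℂ A))‖ ≤ Real.sqrt δ) :
    cfcₙ Real.sqrt b' * (h * h) * cfcₙ Real.sqrt b' ≤ b' ∧
      (1 - 2 * Real.sqrt δ) • b' ≤ cfcₙ Real.sqrt b' * (h * h) * cfcₙ Real.sqrt b' ∧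
      ‖b' - cfcₙ Real.sqrt b' * (h * h) * cfcₙ Real.sqrt b'‖ ≤ 2 * Real.sqrt δ := by
  rw [← CFC.sqrt_eq_real_sqrt b']
  set s := CFC.sqrt b'
  have hs : IsSelfAdjoint s := .of_nonneg (CFC.sqrt_nonneg b')
  have hss : s * s = b' := CFC.sqrt_mul_sqrt_self b'
  have hds : d * s = s := hs.mul_eq_of_mul_mul_self_eq (by rw [hss, hdb'])
  have hupper : s * (h * h) * s ≤ b' :=
    hss ▸ conjugate_mul_self_le_mul_self hs hh.isSelfAdjoint hh1
  have hgap : b' - s * (h * h) * s ≤ (2 * Real.sqrt δ) • b' :=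
    calc b' - s * (h * h) * s = s * s - s * (h * h) * s := by rw [hss]
      _ ≤ ‖d * d - d * (h * h) * d‖ • (s * s) :=
          mul_self_sub_conjugate_le_norm_smul hs hh.isSelfAdjoint hd.isSelfAdjoint hds
      _ ≤ (2 * Real.sqrt δ) • b' := by
          rw [hss]
          gcongr
          exact (norm_mul_self_sub_mul_mul_self_mul_le hd1 hh1).trans (by linarith)
  refine ⟨hupper, ?_, norm_le_of_nonneg_of_le_smul (sub_nonneg.mpr hupper) hgap
    (by positivity) hb'1⟩
  rw [sub_smul, one_smul]
  exact sub_le_comm.mp hgap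

/-- Let `b', h, d` be positive contractions in a C*-algebra with
`d b' = b'` and `‖d(1 - h)‖ ≤ √δ` (in the unitization), where `0 < δ < 1`.
Set `b'' := (b')^{1/2} h² (b')^{1/2}`.  Then `b'' ≤ b'`,
`(1 - 2√δ) b' ≤ b''`, and consequently `‖b' - b''‖ ≤ 2√δ`. -/
theorem b''_comparisons {A : Type*} [NonUnitalCStarAlgebra A] [StarModule ℂ A]
    [PartialOrder A] [StarOrderedRing A]
    (b' h d : A) (hb' : 0 ≤ b') (hb'1 : ‖b'‖ ≤ 1) (hh : 0 ≤ h) (hh1 : ‖h‖ ≤ 1)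
    (hd : 0 ≤ d) (hd1 : ‖d‖ ≤ 1) (hdb' : d * b' = b')
    (δ : ℝ) (hδ0 : 0 < δ) (hδ1 : δ < 1)
    (hdh : ‖(d : Unitization ℂ A) * (1 - (h : Unitization ℂ A))‖ ≤ Real.sqrt δ) :
    cfcₙ Real.sqrt b' * (h * h) * cfcₙ Real.sqrt b' ≤ b' ∧
      (1 - 2 * Real.sqrt δ) • b' ≤ cfcₙ Real.sqrt b' * (h * h) * cfcₙ Real.sqrt b' ∧
      ‖b' - cfcₙ Real.sqrt b' * (h * h) * cfcₙ Real.sqrt b'‖ ≤ 2 * Real.sqrt δ :=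
  b''_comparisons_general b' h d hb' hb'1 hh hh1 hd hd1 hdb' δ hdh
end
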